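/- arXiv:math/0511323 — 4 statements merged into one kernel-verified Lean document; each statement's English description precedes it below -/
import Mathlib

section
/- Let q be a real number with 0<q<1, let f be a positive integer, let χ be a Dirichlet character modulo f with values in ℂ, let x>0 and w₁>0 be real, and let s∈ℂ. Then the two series below converge absolutely and w₁·Σ_{n=1}^∞ χ(n)·q^{x+w₁n}·[x+w₁n]_q^{-s} = [f]_q^{-s}·Σ_{a=1}^{f} χ(a)·( w₁·Σ_{k=0}^∞ (q^f)^{w₁k+(x+w₁a)/f}·[w₁k+(x+w₁a)/f]_{q^f}^{-s} ). (This is the series part of Theorem 1: the two-variable Dirichlet q-L-function decomposes into Hurwitz/Barnes-type Changhee q-zeta series with base q^f.) -/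
/-!
Write `n = a + f m` with `1 ≤ a ≤ f`. Then `χ(n) = χ(a)` and `x + w₁ n = f t` with
`t = w₁ m + (x + w₁ a)/f`; since `q^{f t} = (q^f)^t` and `[f t]_q = [f]_q [t]_{q^f}`, the residue
class of `a` contributes `[f]_q^{-s} χ(a)` times a `q^f`-zeta series. Regrouping is legitimate
because the series converge absolutely: on `t ≥ c > 0` the `q`-number `[t]_q` stays between
`[c]_q` and `1/(1-q)`, while `q^t` decays geometrically along arithmetic progressions.
-/

open Complex

/-- The `q`-number `[y]_q = (1 - q^y)/(1 - q)`, where `q^y` is the real power. -/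
noncomputable def qNum (q y : ℝ) : ℝ := (1 - q ^ y) / (1 - q)

section QNumber

variable {q : ℝ}

lemma qNum_pos (hq0 : 0 ≤ q) (hq1 : q < 1) {y : ℝ} (hy : 0 < y) : 0 < qNum q y :=
  div_pos (sub_pos.mpr (Real.rpow_lt_one hq0 hq1 hy)) (sub_pos.mpr hq1)

lemma qNum_nonneg (hq0 : 0 ≤ q) (hq1 : q ≤ 1) {y : ℝ} (hy : 0 ≤ y) : 0 ≤ qNum q y :=
  div_nonneg (sub_nonneg.mpr (Real.rpow_le_one hq0 hq1 hy)) (sub_nonneg.mpr hq1)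

lemma qNum_le_inv_one_sub (hq0 : 0 ≤ q) (hq1 : q ≤ 1) (y : ℝ) : qNum q y ≤ (1 - q)⁻¹ := by
  rw [qNum, div_eq_mul_inv]
  exact mul_le_of_le_one_left (inv_nonneg.mpr (sub_nonneg.mpr hq1))
    (sub_le_self _ (Real.rpow_nonneg hq0 y))

lemma qNum_monotone (hq0 : 0 < q) (hq1 : q ≤ 1) : Monotone (qNum q) := fun _ _ h =>
  div_le_div_of_nonneg_right (sub_le_sub_left (Real.rpow_le_rpow_of_exponent_ge hq0 hq1 h) 1)
    (sub_nonneg.mpr hq1)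

lemma qNum_natCast_mul (hq0 : 0 ≤ q) {n : ℕ} (hqn : q ^ n ≠ 1) (t : ℝ) :
    qNum q (n * t) = qNum q n * qNum (q ^ n) t := by
  have hq : q ≠ 1 := by rintro rfl; exact hqn (one_pow n)
  have h1 : 1 - q ≠ 0 := sub_ne_zero.mpr hq.symm
  have h2 : 1 - q ^ n ≠ 0 := sub_ne_zero.mpr hqn.symm
  rw [qNum, qNum, qNum, Real.rpow_mul hq0, Real.rpow_natCast]
  field_simp

end QNumber

/-- The summand `q^t [t]_q^{-s}` of Changhee's `q`-zeta series. -/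
noncomputable def qZetaSummand (Q : ℝ) (s : ℂ) (t : ℝ) : ℂ :=
  ((Q ^ t : ℝ) : ℂ) * ((qNum Q t : ℝ) : ℂ) ^ (-s)

section QZetaSummand

variable {Q : ℝ} (s : ℂ)

lemma qNum_rpow_le_max (hQ0 : 0 < Q) (hQ1 : Q < 1) {c t : ℝ} (hc : 0 < c) (hct : c ≤ t)
    (r : ℝ) : qNum Q t ^ r ≤ max (qNum Q c ^ r) ((1 - Q)⁻¹ ^ r) := by
  have ht : 0 < qNum Q t := qNum_pos hQ0.le hQ1 (hc.trans_le hct)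
  rcases le_or_gt 0 r with hr | hr
  · exact le_max_of_le_right
      (Real.rpow_le_rpow ht.le (qNum_le_inv_one_sub hQ0.le hQ1.le t) hr)
  · exact le_max_of_le_left (Real.rpow_le_rpow_of_nonpos (qNum_pos hQ0.le hQ1 hc)
      (qNum_monotone hQ0 hQ1.le hct) hr.le)

lemma norm_qZetaSummand_le (hQ0 : 0 < Q) (hQ1 : Q < 1) {c t : ℝ} (hc : 0 < c) (hct : c ≤ t) :
    ‖qZetaSummand Q s t‖ ≤ max (qNum Q c ^ (-s).re) ((1 - Q)⁻¹ ^ (-s).re) * Q ^ t := by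
  rw [qZetaSummand, norm_mul, norm_real, Real.norm_of_nonneg (Real.rpow_nonneg hQ0.le t),
    norm_cpow_eq_rpow_re_of_pos (qNum_pos hQ0.le hQ1 (hc.trans_le hct)), mul_comm]
  gcongr
  exact qNum_rpow_le_max hQ0 hQ1 hc hct _

/-- Along an arithmetic progression the summands decay geometrically, with ratio `Q^w`. -/
lemma summable_norm_qZetaSummand (hQ0 : 0 < Q) (hQ1 : Q < 1) {w c : ℝ} (hw : 0 < w)
    (hc : 0 < c) : Summable fun k : ℕ => ‖qZetaSummand Q s (w * k + c)‖ := by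
  set C := max (qNum Q c ^ (-s).re) ((1 - Q)⁻¹ ^ (-s).re)
  have hgeom : Summable fun k : ℕ => C * Q ^ c * (Q ^ w) ^ k :=
    (summable_geometric_of_lt_one (Real.rpow_nonneg hQ0.le w)
      (Real.rpow_lt_one hQ0.le hQ1 hw)).mul_left _
  refine hgeom.of_nonneg_of_le (fun _ => norm_nonneg _) fun k => ?_
  calc ‖qZetaSummand Q s (w * k + c)‖ ≤ C * Q ^ (w * k + c) :=
        norm_qZetaSummand_le s hQ0 hQ1 hc (le_add_of_nonneg_left (by positivity))
    _ = C * Q ^ c * (Q ^ w) ^ k := by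
        rw [add_comm, Real.rpow_add hQ0, Real.rpow_mul hQ0.le, Real.rpow_natCast, mul_assoc]

lemma qZetaSummand_natCast_mul (hQ0 : 0 ≤ Q) (hQ1 : Q < 1) {n : ℕ} (hn : n ≠ 0) {t : ℝ}
    (ht : 0 ≤ t) :
    qZetaSummand Q s (n * t) = ((qNum Q n : ℝ) : ℂ) ^ (-s) * qZetaSummand (Q ^ n) s t := by
  have hQn : Q ^ n < 1 := pow_lt_one₀ hQ0 hQ1 hn
  rw [qZetaSummand, qZetaSummand, qNum_natCast_mul hQ0 hQn.ne, Real.rpow_mul hQ0,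
    Real.rpow_natCast, ofReal_mul,
    mul_cpow_ofReal_nonneg (qNum_nonneg hQ0 hQ1.le (Nat.cast_nonneg n))
      (qNum_nonneg (pow_nonneg hQ0 n) hQn.le ht)]
  ring

end QZetaSummand

lemma tsum_succ_eq_sum_Icc_tsum {R : Type*} [AddCommGroup R] [UniformSpace R]
    [IsUniformAddGroup R] [CompleteSpace R] [T0Space R] {g : ℕ → R}
    (hg : Summable fun n => g (n + 1)) (N : ℕ) [NeZero N] :
    ∑' n, g (n + 1) = ∑ a ∈ Finset.Icc 1 N, ∑' m, g (a + N * m) := by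
  rw [Nat.sumByResidueClasses hg N]
  refine Finset.sum_nbij' (fun j => j.val + 1) (fun a => ((a - 1 : ℕ) : ZMod N)) ?_ ?_ ?_ ?_ ?_
  · intro j _
    simpa using ZMod.val_lt j
  · simp
  · simp
  · intro a ha
    obtain ⟨ha1, haN⟩ := Finset.mem_Icc.mp ha
    simp only [ZMod.val_cast_of_lt (by omega : a - 1 < N)]
    omega
  · intro j _
    simp only [add_right_comm]

noncomputable def dirichletQSummand {N : ℕ} (χ : DirichletCharacter ℂ N) (q x w : ℝ) (s : ℂ)
    (n : ℕ) : ℂ :=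
  χ n * qZetaSummand q s (x + w * n)

section DirichletQSummand

variable {N : ℕ} (χ : DirichletCharacter ℂ N) {q x w : ℝ} (s : ℂ)

lemma summable_dirichletQSummand_succ (hq0 : 0 < q) (hq1 : q < 1) (hx : 0 ≤ x) (hw : 0 < w) :
    Summable fun n => dirichletQSummand χ q x w s (n + 1) := by
  refine (summable_norm_qZetaSummand s hq0 hq1 hw (add_pos_of_nonneg_of_pos hx hw)).of_norm_bounded fun n => ?_
  have harg : x + w * ((n + 1 : ℕ) : ℝ) = w * n + (x + w) := by push_cast; ring
  rw [dirichletQSummand, norm_mul, harg]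
  exact mul_le_of_le_one_left (norm_nonneg _) (χ.norm_le_one _)

lemma dirichletQSummand_add_mul (hq0 : 0 ≤ q) (hq1 : q < 1) (hN : N ≠ 0) (hx : 0 ≤ x)
    (hw : 0 ≤ w) (a m : ℕ) :
    dirichletQSummand χ q x w s (a + N * m) = ((qNum q N : ℝ) : ℂ) ^ (-s) *
      (χ a * qZetaSummand (q ^ N) s (w * m + (x + w * a) / N)) := by
  have harg : x + w * ((a + N * m : ℕ) : ℝ) = N * (w * m + (x + w * a) / N) := by
    push_cast
    field_simp
    ring
  rw [dirichletQSummand, harg, qZetaSummand_natCast_mul s hq0 hq1 hN (by positivity)]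
  simp only [Nat.cast_add, Nat.cast_mul, ZMod.natCast_self, zero_mul, add_zero]
  ring

end DirichletQSummand

/-- Theorem 1 (series part): the two-variable Dirichlet `q`-`L`-series decomposes into
Hurwitz/Barnes-type Changhee `q`-zeta series with base `q^f`. -/
theorem stmt0 (q : ℝ) (hq0 : 0 < q) (hq1 : q < 1) (f : ℕ) (hf : 0 < f)
    (χ : DirichletCharacter ℂ f) (x w₁ : ℝ) (hx : 0 < x) (hw₁ : 0 < w₁) (s : ℂ) :
    Summable (fun n : ℕ => χ ((n + 1 : ℕ) : ZMod f) *
        ((q ^ (x + w₁ * ((n : ℝ) + 1)) : ℝ) : ℂ) *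
        ((qNum q (x + w₁ * ((n : ℝ) + 1)) : ℝ) : ℂ) ^ (-s)) ∧
    (∀ a : ℕ, Summable (fun k : ℕ =>
        (((q ^ f) ^ (w₁ * (k : ℝ) + (x + w₁ * (a : ℝ)) / (f : ℝ)) : ℝ) : ℂ) *
        ((qNum (q ^ f) (w₁ * (k : ℝ) + (x + w₁ * (a : ℝ)) / (f : ℝ)) : ℝ) : ℂ) ^ (-s))) ∧
    (w₁ : ℂ) * ∑' n : ℕ, χ ((n + 1 : ℕ) : ZMod f) *
        ((q ^ (x + w₁ * ((n : ℝ) + 1)) : ℝ) : ℂ) *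
        ((qNum q (x + w₁ * ((n : ℝ) + 1)) : ℝ) : ℂ) ^ (-s)
      = ((qNum q (f : ℝ) : ℝ) : ℂ) ^ (-s) *
        ∑ a ∈ Finset.Icc 1 f, χ ((a : ℕ) : ZMod f) *
          ((w₁ : ℂ) * ∑' k : ℕ,
            (((q ^ f) ^ (w₁ * (k : ℝ) + (x + w₁ * (a : ℝ)) / (f : ℝ)) : ℝ) : ℂ) *
            ((qNum (q ^ f) (w₁ * (k : ℝ) + (x + w₁ * (a : ℝ)) / (f : ℝ)) : ℝ) : ℂ) ^ (-s)) := by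
  have : NeZero f := ⟨hf.ne'⟩
  have hL : (fun n : ℕ => χ ((n + 1 : ℕ) : ZMod f) * ((q ^ (x + w₁ * ((n : ℝ) + 1)) : ℝ) : ℂ) *
      ((qNum q (x + w₁ * ((n : ℝ) + 1)) : ℝ) : ℂ) ^ (-s)) =
      fun n => dirichletQSummand χ q x w₁ s (n + 1) := by
    funext n
    simp only [dirichletQSummand, qZetaSummand, Nat.cast_add, Nat.cast_one, mul_assoc]
  have hsumL := summable_dirichletQSummand_succ χ s hq0 hq1 hx.le hw₁
  have hsumR (a : ℕ) := (summable_norm_qZetaSummand s (pow_pos hq0 f)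
    (pow_lt_one₀ hq0.le hq1 hf.ne') hw₁ (by positivity : 0 < (x + w₁ * a) / f)).of_norm
  refine ⟨hL ▸ hsumL, hsumR, ?_⟩
  rw [hL, tsum_succ_eq_sum_Icc_tsum hsumL f, Finset.mul_sum, Finset.mul_sum]
  refine Finset.sum_congr rfl fun a _ => ?_
  simp only [dirichletQSummand_add_mul χ s hq0.le hq1 hf.ne' hx.le hw₁.le, tsum_mul_left,
    qZetaSummand]
  ring
end

section
/- Let q be a real number with 0<q<1, let f be a positive integer, let χ be a NON-trivial Dirichlet character modulo f with values in ℂ, let x>0 and w₁>0 be real, and let n be a positive integer. Then w₁·Σ_{m=1}^∞ χ(m)·q^{x+w₁m}·[x+w₁m]_q^{n-1} = -(1/n)·[f]_q^{n-1}·Σ_{a=1}^{f} χ(a)·β_n((x+w₁a)/f : q^f | w₁), where β_n(w:q'|w₁) is the Barnes-type Changhee q-Bernoulli polynomial in its closed form with base q'=q^f. (Theorem 2: the value of the two-variable Dirichlet q-L-function at s=1-n equals -β_{n,χ}(x:q|w₁)/n, with β_{n,χ} expressed through the distribution relation.) -/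
/-!
Expand `q^y [y]_q^{n-1} = (1-q)^{1-n} Σ_l C(n-1,l) (-1)^l q^{(l+1)y}` binomially. For
`y = x + w₁ m` the `m`-dependence is then a geometric factor `ρ_l^m` with `ρ_l = q^{(l+1)w₁} < 1`,
and since `χ` is `f`-periodic, `Σ_{m≥1} χ(m) ρ^m = (Σ_{a=1}^f χ(a) ρ^a)/(1 - ρ^f)`. On the other
side, with base `q^f` and `w = (x + w₁ a)/f`, the `l`-th term of `β_n` becomes exactly
`q^{lx} ρ_{l-1}^a/(1 - ρ_{l-1}^f)` up to a factor independent of `a`, while its constant term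
`(q^f - 1)/log q^f` is annihilated by `Σ_{a=1}^f χ(a) = 0`.
-/

open Complex

/-- The Barnes-type Changhee `q`-Bernoulli polynomial in closed form:
`β_n(w : q | w₁) = (1-q)^{-n}·( (q-1)/log q
  + Σ_{l=1}^{n} C(n,l)·(-1)^l·q^{lw}·(l·w₁·(1-q))/(1-q^{l·w₁}) )`. -/
noncomputable def chBeta (n : ℕ) (w q w₁ : ℝ) : ℝ :=
  ((1 - q) ^ n)⁻¹ * ((q - 1) / Real.log q +
    ∑ l ∈ Finset.Icc 1 n, (n.choose l : ℝ) * (-1) ^ l * q ^ ((l : ℝ) * w) *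
      ((l : ℝ) * w₁ * (1 - q)) / (1 - q ^ ((l : ℝ) * w₁)))

open Finset

theorem Finset.sum_Icc_one_eq_sum_range {M : Type*} [AddCommMonoid M] (f : ℕ) (g : ℕ → M) :
    ∑ a ∈ Icc 1 f, g a = ∑ a ∈ range f, g (a + 1) := by
  rw [← Ico_add_one_right_eq_Icc, sum_Ico_eq_sum_range, Nat.add_sub_cancel]
  simp only [add_comm 1]

theorem ZMod.sum_range_natCast {M : Type*} [AddCommMonoid M] (f : ℕ) [NeZero f]
    (g : ZMod f → M) : ∑ a ∈ range f, g a = ∑ z, g z := by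
  obtain ⟨k, rfl⟩ := Nat.exists_eq_add_one_of_ne_zero (NeZero.ne f)
  rw [← Fin.sum_univ_eq_sum_range (fun a => g a)]
  exact Fintype.sum_congr _ _ fun i => congrArg g (Fin.cast_val_eq_self i)

theorem ZMod.sum_Icc_one_natCast {M : Type*} [AddCommMonoid M] (f : ℕ) [NeZero f]
    (g : ZMod f → M) : ∑ a ∈ Icc 1 f, g a = ∑ z, g z := by
  rw [sum_Icc_one_eq_sum_range]
  push_cast
  rw [ZMod.sum_range_natCast f (fun z => g (z + 1))]
  exact Equiv.sum_comp (Equiv.addRight 1) g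

theorem DirichletCharacter.hasSum_mul_geometric {F : Type*} [NormedField F] [CompleteSpace F]
    {f : ℕ} (hf : 0 < f) (χ : DirichletCharacter F f) {ρ : F} (hρ : ‖ρ‖ < 1) :
    HasSum (fun m : ℕ => χ (m + 1 : ℕ) * ρ ^ (m + 1))
      ((∑ a ∈ Icc 1 f, χ a * ρ ^ a) / (1 - ρ ^ f)) := by
  set g : ℕ → F := fun m => χ (m + 1 : ℕ) * ρ ^ (m + 1)
  have hg : Summable g := by
    refine .of_norm_bounded (summable_geometric_of_lt_one (norm_nonneg ρ) hρ) fun m => ?_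
    calc ‖g m‖ ≤ 1 * ‖ρ‖ ^ (m + 1) := by
          rw [norm_mul, norm_pow]
          gcongr
          exact χ.norm_le_one _
      _ ≤ ‖ρ‖ ^ m := by
          rw [one_mul, pow_succ]
          exact mul_le_of_le_one_right (by positivity) hρ.le
  have hperiod : ∀ m, g (m + f) = ρ ^ f * g m := fun m => by
    simp only [g, Nat.cast_add, ZMod.natCast_self, add_zero, pow_add]
    ring
  have hρf : 1 - ρ ^ f ≠ 0 := by
    refine sub_ne_zero.2 fun h => (pow_lt_one₀ (norm_nonneg ρ) hρ hf.ne').ne ?_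
    rw [← norm_pow, ← h, norm_one]
  have hsplit := hg.sum_add_tsum_nat_add f
  rw [tsum_congr hperiod, tsum_mul_left] at hsplit
  convert hg.hasSum using 1
  rw [div_eq_iff hρf, sum_Icc_one_eq_sum_range]
  linear_combination hsplit

theorem rpow_mul_qNum_pow (q y : ℝ) (k : ℕ) :
    q ^ y * qNum q y ^ k =
      ((1 - q) ^ k)⁻¹ * ∑ l ∈ range (k + 1), (k.choose l : ℝ) * (-1) ^ l * (q ^ y) ^ (l + 1) := by
  rw [qNum, div_pow, sub_eq_neg_add 1 (q ^ y), add_pow, sum_div, mul_sum, mul_sum]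
  refine sum_congr rfl fun l _ => ?_
  rw [neg_pow, pow_succ]
  ring

theorem Real.rpow_mul_add_mul_natCast {q : ℝ} (hq : 0 < q) (j x w : ℝ) (t : ℕ) :
    q ^ (j * (x + w * t)) = q ^ (j * x) * (q ^ (j * w)) ^ t := by
  rw [← Real.rpow_natCast, ← Real.rpow_mul hq.le, ← Real.rpow_add hq]
  ring_nf

theorem chBeta_succ {Q : ℝ} (hQ : Q ≠ 1) (k : ℕ) (w w₁ : ℝ) :
    chBeta (k + 1) w Q w₁ = ((1 - Q) ^ (k + 1))⁻¹ * ((Q - 1) / Real.log Q) -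
      (k + 1) * ((1 - Q) ^ k)⁻¹ * w₁ * ∑ l ∈ range (k + 1),
        (k.choose l : ℝ) * (-1) ^ l * Q ^ (((l : ℝ) + 1) * w) / (1 - Q ^ (((l : ℝ) + 1) * w₁)) := by
  have hQ' : 1 - Q ≠ 0 := sub_ne_zero.2 hQ.symm
  rw [chBeta, sum_Icc_one_eq_sum_range, mul_add, mul_sum, mul_sum,
    sub_eq_add_neg (((1 - Q) ^ (k + 1))⁻¹ * _), ← sum_neg_distrib]
  congr 1
  refine sum_congr rfl fun l _ => ?_
  have hchoose : ((k + 1).choose (l + 1) : ℝ) * ((l : ℝ) + 1) = ((k : ℝ) + 1) * k.choose l := by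
    exact_mod_cast (Nat.add_one_mul_choose_eq k l).symm
  push_cast
  rw [pow_succ (1 - Q), mul_inv]
  linear_combination (-((1 - Q) ^ k)⁻¹ * (-1) ^ l * Q ^ (((l : ℝ) + 1) * w) * w₁ *
      (1 - Q ^ (((l : ℝ) + 1) * w₁))⁻¹ * (1 - Q)⁻¹ * (1 - Q)) * hchoose +
    (-((k : ℝ) + 1) * ((1 - Q) ^ k)⁻¹ * w₁ * k.choose l * (-1) ^ l * Q ^ (((l : ℝ) + 1) * w) *
      (1 - Q ^ (((l : ℝ) + 1) * w₁))⁻¹) * inv_mul_cancel₀ hQ'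

theorem exists_qNum_pow_mul_chBeta_eq_const_add {q : ℝ} (hq0 : 0 < q) (hq1 : q < 1) {f : ℕ}
    (hf : f ≠ 0) (k : ℕ) (x w₁ : ℝ) :
    ∃ C : ℝ, ∀ a : ℕ,
      -(1 / ((k : ℝ) + 1)) * qNum q f ^ k * chBeta (k + 1) ((x + w₁ * a) / f) (q ^ f) w₁ =
        C + w₁ * ∑ l ∈ range (k + 1),
          ((1 - q) ^ k)⁻¹ * k.choose l * (-1) ^ l * q ^ (((l : ℝ) + 1) * x) *
            ((q ^ (((l : ℝ) + 1) * w₁)) ^ a / (1 - (q ^ (((l : ℝ) + 1) * w₁)) ^ f)) := by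
  have hqf : q ^ f < 1 := pow_lt_one₀ hq0.le hq1 hf
  refine ⟨-(1 / ((k : ℝ) + 1)) * qNum q f ^ k *
    (((1 - q ^ f) ^ (k + 1))⁻¹ * ((q ^ f - 1) / Real.log (q ^ f))), fun a => ?_⟩
  rw [chBeta_succ hqf.ne, mul_sub, sub_eq_add_neg]
  congr 1
  rw [mul_sum, mul_sum, mul_sum, ← sum_neg_distrib]
  refine sum_congr rfl fun l _ => ?_
  have hshift : (q ^ f) ^ (((l : ℝ) + 1) * ((x + w₁ * a) / f)) =
      q ^ (((l : ℝ) + 1) * x) * (q ^ (((l : ℝ) + 1) * w₁)) ^ a := by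
    rw [← Real.rpow_natCast q f, ← Real.rpow_mul hq0.le, ← Real.rpow_mul_add_mul_natCast hq0]
    congr 1
    field_simp
  rw [hshift, ← Real.rpow_pow_comm hq0.le, qNum, Real.rpow_natCast, div_pow]
  have hk : (k : ℝ) + 1 ≠ 0 := by positivity
  have h1 : (1 - q) ^ k ≠ 0 := pow_ne_zero _ (by linarith)
  have h2 : (1 - q ^ f) ^ k ≠ 0 := pow_ne_zero _ (by linarith)
  field_simp

theorem tsum_mul_rpow_mul_qNum_pow {q : ℝ} (hq0 : 0 < q) (hq1 : q < 1) {f : ℕ} (hf : 0 < f)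
    (χ : DirichletCharacter ℂ f) (x : ℝ) {w₁ : ℝ} (hw₁ : 0 < w₁) (k : ℕ) :
    ∑' m : ℕ, χ ((m + 1 : ℕ) : ZMod f) * ((q ^ (x + w₁ * ((m : ℝ) + 1)) : ℝ) : ℂ) *
        ((qNum q (x + w₁ * ((m : ℝ) + 1)) : ℝ) : ℂ) ^ k =
      ∑ l ∈ range (k + 1),
        ((((1 - q) ^ k)⁻¹ * k.choose l * (-1) ^ l * q ^ (((l : ℝ) + 1) * x) : ℝ) : ℂ) *
          ((∑ a ∈ Icc 1 f, χ a * ((q ^ (((l : ℝ) + 1) * w₁) : ℝ) : ℂ) ^ a) /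
            (1 - ((q ^ (((l : ℝ) + 1) * w₁) : ℝ) : ℂ) ^ f)) := by
  have hterm : ∀ m : ℕ, χ ((m + 1 : ℕ) : ZMod f) * ((q ^ (x + w₁ * ((m : ℝ) + 1)) : ℝ) : ℂ) *
      ((qNum q (x + w₁ * ((m : ℝ) + 1)) : ℝ) : ℂ) ^ k =
      ∑ l ∈ range (k + 1),
        ((((1 - q) ^ k)⁻¹ * k.choose l * (-1) ^ l * q ^ (((l : ℝ) + 1) * x) : ℝ) : ℂ) *
          (χ ((m + 1 : ℕ) : ZMod f) * ((q ^ (((l : ℝ) + 1) * w₁) : ℝ) : ℂ) ^ (m + 1)) := fun m => by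
    have hreal : q ^ (x + w₁ * ((m : ℝ) + 1)) * qNum q (x + w₁ * ((m : ℝ) + 1)) ^ k =
        ∑ l ∈ range (k + 1), ((1 - q) ^ k)⁻¹ * k.choose l * (-1) ^ l * q ^ (((l : ℝ) + 1) * x) *
          (q ^ (((l : ℝ) + 1) * w₁)) ^ (m + 1) := by
      rw [rpow_mul_qNum_pow, mul_sum]
      refine sum_congr rfl fun l _ => ?_
      rw [← Real.rpow_natCast _ (l + 1), ← Real.rpow_mul hq0.le, mul_comm _ ((l + 1 : ℕ) : ℝ),
        show ((m : ℝ) + 1) = ((m + 1 : ℕ) : ℝ) by push_cast; ring,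
        Real.rpow_mul_add_mul_natCast hq0]
      push_cast
      ring
    calc _ = χ ((m + 1 : ℕ) : ZMod f) *
          ((q ^ (x + w₁ * ((m : ℝ) + 1)) * qNum q (x + w₁ * ((m : ℝ) + 1)) ^ k : ℝ) : ℂ) := by
          push_cast
          ring
      _ = _ := by
          rw [hreal]
          push_cast
          rw [mul_sum]
          exact sum_congr rfl fun l _ => by ring
  have hρ : ∀ l : ℕ, ‖((q ^ (((l : ℝ) + 1) * w₁) : ℝ) : ℂ)‖ < 1 := fun l => by
    rw [Complex.norm_real, Real.norm_of_nonneg (by positivity)]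
    exact Real.rpow_lt_one hq0.le hq1 (by positivity)
  rw [tsum_congr hterm]
  exact (hasSum_sum fun l _ => (χ.hasSum_mul_geometric hf (hρ l)).mul_left _).tsum_eq

theorem stmt2_general (q : ℝ) (hq0 : 0 < q) (hq1 : q < 1) (f : ℕ) (hf : 0 < f)
    (χ : DirichletCharacter ℂ f) (hχ : χ ≠ 1) (x w₁ : ℝ) (hw₁ : 0 < w₁)
    (n : ℕ) (hn : 0 < n) :
    (w₁ : ℂ) * ∑' m : ℕ, χ ((m + 1 : ℕ) : ZMod f) *
        ((q ^ (x + w₁ * ((m : ℝ) + 1)) : ℝ) : ℂ) *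
        ((qNum q (x + w₁ * ((m : ℝ) + 1)) : ℝ) : ℂ) ^ ((n : ℂ) - 1)
      = -(1 / (n : ℂ)) * ((qNum q (f : ℝ) : ℝ) : ℂ) ^ ((n : ℂ) - 1) *
        ∑ a ∈ Finset.Icc 1 f, χ ((a : ℕ) : ZMod f) *
          ((chBeta n ((x + w₁ * (a : ℝ)) / (f : ℝ)) (q ^ f) w₁ : ℝ) : ℂ) := by
  have : NeZero f := NeZero.of_pos hf
  obtain ⟨k, rfl⟩ := Nat.exists_eq_add_one_of_ne_zero hn.ne'
  have hexp : ((k + 1 : ℕ) : ℂ) - 1 = (k : ℕ) := by push_cast; ring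
  have hχsum : ∑ a ∈ Icc 1 f, χ a = 0 :=
    (ZMod.sum_Icc_one_natCast f χ).trans (MulChar.sum_eq_zero_of_ne_one hχ)
  obtain ⟨C, hC⟩ := exists_qNum_pow_mul_chBeta_eq_const_add hq0 hq1 hf.ne' k x w₁
  simp only [hexp, Complex.cpow_natCast]
  rw [tsum_mul_rpow_mul_qNum_pow hq0 hq1 hf χ x hw₁ k]
  calc _ = (∑ a ∈ Icc 1 f, χ a) * C + w₁ * ∑ l ∈ range (k + 1),
        ((((1 - q) ^ k)⁻¹ * k.choose l * (-1) ^ l * q ^ (((l : ℝ) + 1) * x) : ℝ) : ℂ) *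
          ((∑ a ∈ Icc 1 f, χ a * ((q ^ (((l : ℝ) + 1) * w₁) : ℝ) : ℂ) ^ a) /
            (1 - ((q ^ (((l : ℝ) + 1) * w₁) : ℝ) : ℂ) ^ f)) := by
        rw [hχsum, zero_mul, zero_add]
    _ = ∑ a ∈ Icc 1 f, χ a * ((-(1 / ((k : ℝ) + 1)) * qNum q f ^ k *
          chBeta (k + 1) ((x + w₁ * a) / f) (q ^ f) w₁ : ℝ) : ℂ) := by
        simp only [hC]
        push_cast
        simp only [mul_add, sum_add_distrib, sum_mul, mul_sum, sum_div]
        rw [sum_comm]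
        congr 1
        exact sum_congr rfl fun _ _ => sum_congr rfl fun _ _ => by ring
    _ = _ := by
        rw [mul_sum]
        push_cast
        exact sum_congr rfl fun a _ => by ring

/-- Theorem 2: for a non-trivial Dirichlet character `χ` mod `f`, the value of the two-variable
Dirichlet `q`-`L`-function at `s = 1-n` equals `-β_{n,χ}(x : q | w₁)/n`, with `β_{n,χ}` expressed
through the distribution relation. -/
theorem stmt2 (q : ℝ) (hq0 : 0 < q) (hq1 : q < 1) (f : ℕ) (hf : 0 < f)
    (χ : DirichletCharacter ℂ f) (hχ : χ ≠ 1) (x w₁ : ℝ) (hx : 0 < x) (hw₁ : 0 < w₁)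
    (n : ℕ) (hn : 0 < n) :
    (w₁ : ℂ) * ∑' m : ℕ, χ ((m + 1 : ℕ) : ZMod f) *
        ((q ^ (x + w₁ * ((m : ℝ) + 1)) : ℝ) : ℂ) *
        ((qNum q (x + w₁ * ((m : ℝ) + 1)) : ℝ) : ℂ) ^ ((n : ℂ) - 1)
      = -(1 / (n : ℂ)) * ((qNum q (f : ℝ) : ℝ) : ℂ) ^ ((n : ℂ) - 1) *
        ∑ a ∈ Finset.Icc 1 f, χ ((a : ℕ) : ZMod f) *
          ((chBeta n ((x + w₁ * (a : ℝ)) / (f : ℝ)) (q ^ f) w₁ : ℝ) : ℂ) :=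
  stmt2_general q hq0 hq1 f hf χ hχ x w₁ hw₁ n hn
end

section
/- Let q be a real number with 0<q<1, let r and f be positive integers, let χ be a Dirichlet character modulo f with values in ℂ, let x>0 be real and w₁,…,w_r be positive reals. Define G:ℂ→ℂ by G(t) = (-t)^r·(∏_{j=1}^r w_j)·Σ_{(n₁,…,n_r)∈(ℤ_{≥1})^r} (∏_{k=1}^r χ(n_k))·q^{Σ_{m=1}^r w_m n_m}·exp([x+Σ_{m=1}^r w_m n_m]_q·t) (the series converges locally uniformly on ℂ). Then for every integer n≥0 the (n+r)-th iterated derivative of G at 0 equals (-1)^r·((n+r)!/n!)·(∏_{j=1}^r w_j)·Σ_{(n₁,…,n_r)∈(ℤ_{≥1})^r} (∏_{k=1}^r χ(n_k))·q^{Σ_{m=1}^r w_m n_m}·[x+Σ_{m=1}^r w_m n_m]_q^{n}. Equivalently, writing B^{(r)}_{N,χ}(x:q|w₁,…,w_r) for the N-th derivative of the generating function G at 0, the two-variable multiple Dirichlet q-L-series value L_{q,r}(-n,x|χ;w₁,…,w_r) equals (-1)^r·(n!/(n+r)!)·B^{(r)}_{n+r,χ}(x:q|w₁,…,w_r). (Theorem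 4, with the index of the Bernoulli polynomial corrected to n+r.) -/
open Complex

/-!
Write the generating function as `G t = (-1)^r (∏ w) t^r F(t)` with `F t = ∑ a_ν exp(d_ν t)`.
The weights `a_ν` are absolutely summable (`|χ| ≤ 1` and `q^{∑ w_m (ν_m+1)}` is a product of
geometric sequences) and the `q`-numbers `d_ν` are bounded, so expanding each exponential and
exchanging the two summations shows that `F` is entire with Taylor coefficients
`∑ a_ν d_ν^j / j!`. By Leibniz's rule only the term where all `r` derivatives fall on `t^r`
survives at `0`, which contributes the factor `(n+r choose r) r! = (n+r)!/n!`.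
-/

open FormalMultilinearSeries Nat

theorem summable_prod_pi_of_nonneg {ι : Type*} :
    ∀ {r : ℕ} (g : Fin r → ι → ℝ), (∀ m, 0 ≤ g m) → (∀ m, Summable (g m)) →
      Summable fun ν : Fin r → ι => ∏ m, g m (ν m)
  | 0, _, _, _ => .of_finite
  | _ + 1, g, hg0, hg => by
    have hprod := (hg 0).mul_of_nonneg
      (summable_prod_pi_of_nonneg (fun m => g m.succ) (fun m => hg0 m.succ) (fun m => hg m.succ))
      (hg0 0) fun ν => Finset.prod_nonneg fun m _ => hg0 m.succ (ν m)
    refine (Fin.consEquiv fun _ => ι).summable_iff.mp (hprod.congr fun p => ?_)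
    simp [Fin.prod_univ_succ]

section IteratedDeriv

variable {𝕜 : Type*} [NontriviallyNormedField 𝕜]

theorem HasFPowerSeriesAt.iteratedDeriv_ofScalars [CompleteSpace 𝕜] {f : 𝕜 → 𝕜} {c : ℕ → 𝕜}
    {x : 𝕜} (hf : HasFPowerSeriesAt f (ofScalars 𝕜 c) x) (n : ℕ) :
    iteratedDeriv n f x = n ! * c n := by
  obtain ⟨R, hR⟩ := hf
  rw [iteratedDeriv_eq_iteratedFDeriv, ← hR.factorial_smul 1 n, ofScalars_apply_eq]
  simp

theorem iteratedDeriv_pow_mul_zero {f : 𝕜 → 𝕜} {n r : ℕ} (hf : ContDiffAt 𝕜 (n + r) f 0) :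
    iteratedDeriv (n + r) (fun t => t ^ r * f t) 0 =
      ((n + r).choose r * r ! : 𝕜) * iteratedDeriv n f 0 := by
  rw [iteratedDeriv_fun_mul (by fun_prop) hf,
    Finset.sum_eq_single_of_mem r (by simp) fun i _ hi => by
      simp only [iteratedDeriv_fun_pow_zero, if_neg hi, Nat.cast_zero, mul_zero, zero_mul]]
  simp only [iteratedDeriv_fun_pow_zero, if_pos, Nat.add_sub_cancel]

end IteratedDeriv

section ExpSums

variable {ι : Type*} {a d : ι → ℂ} {M : ℝ}

theorem summable_norm_mul_pow (ha : Summable fun ν => ‖a ν‖) (hd : ∀ ν, ‖d ν‖ ≤ M) (j : ℕ) :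
    Summable fun ν => ‖a ν * d ν ^ j‖ :=
  (ha.mul_right (M ^ j)).of_nonneg_of_le (fun _ => norm_nonneg _) fun ν => by
    rw [norm_mul, norm_pow]
    gcongr
    exact hd ν

theorem norm_tsum_mul_pow_le (ha : Summable fun ν => ‖a ν‖) (hd : ∀ ν, ‖d ν‖ ≤ M) (j : ℕ) :
    ‖∑' ν, a ν * d ν ^ j‖ ≤ (∑' ν, ‖a ν‖) * M ^ j :=
  calc ‖∑' ν, a ν * d ν ^ j‖ ≤ ∑' ν, ‖a ν * d ν ^ j‖ :=
        norm_tsum_le_tsum_norm (summable_norm_mul_pow ha hd j)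
    _ ≤ ∑' ν, ‖a ν‖ * M ^ j :=
        (summable_norm_mul_pow ha hd j).tsum_le_tsum (fun ν => by
          rw [norm_mul, norm_pow]
          gcongr
          exact hd ν) (ha.mul_right _)
    _ = (∑' ν, ‖a ν‖) * M ^ j := tsum_mul_right

theorem hasSum_tsum_mul_cexp (ha : Summable fun ν => ‖a ν‖) (hd : ∀ ν, ‖d ν‖ ≤ M)
    (t : ℂ) :
    HasSum (fun j : ℕ => (∑' ν, a ν * d ν ^ j) / j ! * t ^ j) (∑' ν, a ν * exp (d ν * t)) := by
  have hT : Summable fun p : ι × ℕ => a p.1 * ((d p.1 * t) ^ p.2 / p.2 !) := by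
    refine .of_norm_bounded (ha.mul_of_nonneg (Real.summable_pow_div_factorial (|M| * ‖t‖))
      (fun _ => norm_nonneg _) fun j => by positivity) fun p => ?_
    simp only [norm_mul, norm_div, norm_pow, norm_natCast]
    gcongr
    exact (hd p.1).trans (le_abs_self M)
  have hrows : ∀ ν, HasSum (fun j : ℕ => a ν * ((d ν * t) ^ j / j !)) (a ν * exp (d ν * t)) := by
    intro ν
    rw [exp_eq_exp_ℂ]
    exact (NormedSpace.expSeries_div_hasSum_exp _).mul_left (a ν)
  have hcols : ∀ j : ℕ, HasSum (fun ν => a ν * ((d ν * t) ^ j / j !))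
      ((∑' ν, a ν * d ν ^ j) / j ! * t ^ j) := by
    intro j
    rw [show (∑' ν, a ν * d ν ^ j) / j ! * t ^ j = (∑' ν, a ν * d ν ^ j) * (t ^ j / j !) by ring]
    exact ((summable_norm_mul_pow ha hd j).of_norm.hasSum.mul_right _).congr_fun fun ν => by ring
  rw [(hT.hasSum.prod_fiberwise hrows).tsum_eq]
  exact ((Equiv.prodComm ℕ ι).hasSum_iff.mpr hT.hasSum).prod_fiberwise hcols

theorem hasFPowerSeriesOnBall_tsum_mul_cexp (ha : Summable fun ν => ‖a ν‖)
    (hd : ∀ ν, ‖d ν‖ ≤ M) :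
    HasFPowerSeriesOnBall (fun t => ∑' ν, a ν * exp (d ν * t))
      (ofScalars ℂ fun j => (∑' ν, a ν * d ν ^ j) / j !) 0 ⊤ where
  r_le := by
    refine (radius_eq_top_of_summable_norm _ fun R => ?_).ge
    refine ((Real.summable_pow_div_factorial (M * R)).mul_left (∑' ν, ‖a ν‖)).of_nonneg_of_le
      (fun _ => by positivity) fun j => ?_
    calc ‖ofScalars ℂ (fun j => (∑' ν, a ν * d ν ^ j) / j !) j‖ * (R : ℝ) ^ j
        = ‖∑' ν, a ν * d ν ^ j‖ * R ^ j / j ! := by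
          rw [ofScalars_norm, norm_div, norm_natCast, div_mul_eq_mul_div]
      _ ≤ (∑' ν, ‖a ν‖) * M ^ j * R ^ j / j ! := by
          gcongr
          exact norm_tsum_mul_pow_le ha hd j
      _ = (∑' ν, ‖a ν‖) * ((M * R) ^ j / j !) := by ring
  r_pos := ENNReal.zero_lt_top
  hasSum := fun {t} _ => by
    simpa [ofScalars_apply_eq, mul_comm] using hasSum_tsum_mul_cexp ha hd t

theorem iteratedDeriv_tsum_mul_cexp_zero (ha : Summable fun ν => ‖a ν‖) (hd : ∀ ν, ‖d ν‖ ≤ M)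
    (n : ℕ) :
    iteratedDeriv n (fun t => ∑' ν, a ν * exp (d ν * t)) 0 = ∑' ν, a ν * d ν ^ n := by
  rw [(hasFPowerSeriesOnBall_tsum_mul_cexp ha hd).hasFPowerSeriesAt.iteratedDeriv_ofScalars]
  exact mul_div_cancel₀ _ (Nat.cast_ne_zero.2 n.factorial_ne_zero)

end ExpSums

section QSeries

variable {q : ℝ}

theorem abs_qNum_le (hq0 : 0 < q) (hq1 : q < 1) {x y : ℝ} (hxy : x ≤ y) :
    |qNum q y| ≤ (1 + q ^ x) / (1 - q) := by
  rw [qNum, abs_div, abs_of_pos (sub_pos.2 hq1)]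
  gcongr
  calc |1 - q ^ y| ≤ |1| + |q ^ y| := abs_sub _ _
    _ = 1 + q ^ y := by rw [abs_one, abs_of_pos (Real.rpow_pos_of_pos hq0 y)]
    _ ≤ 1 + q ^ x := add_le_add_right (Real.rpow_le_rpow_of_exponent_ge hq0 hq1.le hxy) 1

theorem rpow_sum_mul_succ (hq0 : 0 < q) {r : ℕ} (w : Fin r → ℝ) (ν : Fin r → ℕ) :
    q ^ (∑ m, w m * ((ν m : ℝ) + 1)) = ∏ m, (q ^ w m) ^ (ν m + 1) := by
  rw [Real.rpow_sum_of_pos hq0]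
  refine Finset.prod_congr rfl fun m _ => ?_
  rw [Real.rpow_mul hq0.le, ← Real.rpow_natCast]
  push_cast
  rfl

theorem summable_rpow_sum_mul_succ (hq0 : 0 < q) (hq1 : q < 1) {r : ℕ} {w : Fin r → ℝ}
    (hw : ∀ j, 0 < w j) : Summable fun ν : Fin r → ℕ => q ^ (∑ m, w m * ((ν m : ℝ) + 1)) := by
  simp_rw [rpow_sum_mul_succ hq0]
  refine summable_prod_pi_of_nonneg (fun m n => (q ^ w m) ^ (n + 1)) (fun m n => by positivity)
    fun m => ?_
  simp_rw [pow_succ]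
  exact (summable_geometric_of_lt_one (by positivity)
    (Real.rpow_lt_one hq0.le hq1 (hw m))).mul_right _

theorem summable_norm_prod_dirichletCharacter_mul_rpow (hq0 : 0 < q) (hq1 : q < 1) {r f : ℕ}
    {w : Fin r → ℝ} (hw : ∀ j, 0 < w j) (χ : DirichletCharacter ℂ f) :
    Summable fun ν : Fin r → ℕ =>
      ‖(∏ k, χ ((ν k + 1 : ℕ) : ZMod f)) * ((q ^ (∑ m, w m * ((ν m : ℝ) + 1)) : ℝ) : ℂ)‖ := by
  refine (summable_rpow_sum_mul_succ hq0 hq1 hw).of_nonneg_of_le (fun _ => norm_nonneg _)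
    fun ν => ?_
  rw [norm_mul, norm_real, Real.norm_of_nonneg (by positivity)]
  refine mul_le_of_le_one_left (by positivity) ?_
  exact (norm_prod _ _).le.trans
    (Finset.prod_le_one (fun _ _ => norm_nonneg _) fun k _ => χ.norm_le_one _)

end QSeries

theorem stmt4_general (q : ℝ) (hq0 : 0 < q) (hq1 : q < 1) (r f : ℕ)
    (χ : DirichletCharacter ℂ f) (x : ℝ) (w : Fin r → ℝ) (hw : ∀ j, 0 < w j)
    (G : ℂ → ℂ)
    (hG : ∀ t : ℂ, G t = (-t) ^ r * (∏ j, ((w j : ℝ) : ℂ)) *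
      ∑' ν : Fin r → ℕ, (∏ k, χ ((ν k + 1 : ℕ) : ZMod f)) *
        ((q ^ (∑ m, w m * ((ν m : ℝ) + 1)) : ℝ) : ℂ) *
        Complex.exp (((qNum q (x + ∑ m, w m * ((ν m : ℝ) + 1)) : ℝ) : ℂ) * t)) :
    ∀ n : ℕ, iteratedDeriv (n + r) G 0 =
      (-1) ^ r * (((n + r).factorial : ℂ) / (n.factorial : ℂ)) * (∏ j, ((w j : ℝ) : ℂ)) *
        ∑' ν : Fin r → ℕ, (∏ k, χ ((ν k + 1 : ℕ) : ZMod f)) *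
          ((q ^ (∑ m, w m * ((ν m : ℝ) + 1)) : ℝ) : ℂ) *
          ((qNum q (x + ∑ m, w m * ((ν m : ℝ) + 1)) : ℝ) : ℂ) ^ n := by
  intro n
  set a : (Fin r → ℕ) → ℂ := fun ν =>
    (∏ k, χ ((ν k + 1 : ℕ) : ZMod f)) * ((q ^ (∑ m, w m * ((ν m : ℝ) + 1)) : ℝ) : ℂ)
  set d : (Fin r → ℕ) → ℂ := fun ν => ((qNum q (x + ∑ m, w m * ((ν m : ℝ) + 1)) : ℝ) : ℂ)
  have ha : Summable fun ν => ‖a ν‖ := summable_norm_prod_dirichletCharacter_mul_rpow hq0 hq1 hw χ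
  have hd : ∀ ν, ‖d ν‖ ≤ (1 + q ^ x) / (1 - q) := fun ν => by
    rw [norm_real, Real.norm_eq_abs]
    exact abs_qNum_le hq0 hq1 (le_add_of_nonneg_right (Finset.sum_nonneg fun m _ =>
      mul_nonneg (hw m).le (by positivity)))
  have hGeq : G = fun t => ((-1) ^ r * ∏ j, ((w j : ℝ) : ℂ)) *
      (t ^ r * ∑' ν, a ν * exp (d ν * t)) := by
    funext t
    rw [hG, neg_pow]
    ring
  rw [hGeq, iteratedDeriv_const_mul_field,
    iteratedDeriv_pow_mul_zero (hasFPowerSeriesOnBall_tsum_mul_cexp ha hd).analyticAt.contDiffAt,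
    iteratedDeriv_tsum_mul_cexp_zero ha hd]
  have hfact : ((n + r)! / n ! : ℂ) = (n + r).choose r * r ! := by
    rw [div_eq_iff (Nat.cast_ne_zero.2 n.factorial_ne_zero),
      ← Nat.add_choose_mul_factorial_mul_factorial n r]
    push_cast
    ring
  rw [hfact]
  ring

/-- Theorem 4 (with the index of the Bernoulli polynomial corrected to `n+r`): the `(n+r)`-th
iterated derivative at `0` of the generating function `G` of the Barnes-type multiple Changhee
`q`-Bernoulli polynomials attached to `χ` equals
`(-1)^r·((n+r)!/n!)·L_{q,r}(-n, x | χ; w₁,…,w_r)·(n+r)!/n!`-wise, i.e.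
`L_{q,r}(-n,x|χ;w₁,…,w_r) = (-1)^r·(n!/(n+r)!)·B^{(r)}_{n+r,χ}(x:q|w₁,…,w_r)`. -/
theorem stmt4 (q : ℝ) (hq0 : 0 < q) (hq1 : q < 1) (r f : ℕ) (hr : 0 < r) (hf : 0 < f)
    (χ : DirichletCharacter ℂ f) (x : ℝ) (hx : 0 < x) (w : Fin r → ℝ) (hw : ∀ j, 0 < w j)
    (G : ℂ → ℂ)
    (hG : ∀ t : ℂ, G t = (-t) ^ r * (∏ j, ((w j : ℝ) : ℂ)) *
      ∑' ν : Fin r → ℕ, (∏ k, χ ((ν k + 1 : ℕ) : ZMod f)) *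
        ((q ^ (∑ m, w m * ((ν m : ℝ) + 1)) : ℝ) : ℂ) *
        Complex.exp (((qNum q (x + ∑ m, w m * ((ν m : ℝ) + 1)) : ℝ) : ℂ) * t)) :
    ∀ n : ℕ, iteratedDeriv (n + r) G 0 =
      (-1) ^ r * (((n + r).factorial : ℂ) / (n.factorial : ℂ)) * (∏ j, ((w j : ℝ) : ℂ)) *
        ∑' ν : Fin r → ℕ, (∏ k, χ ((ν k + 1 : ℕ) : ZMod f)) *
          ((q ^ (∑ m, w m * ((ν m : ℝ) + 1)) : ℝ) : ℂ) *
          ((qNum q (x + ∑ m, w m * ((ν m : ℝ) + 1)) : ℝ) : ℂ) ^ n :=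
  stmt4_general q hq0 hq1 r f χ x w hw G hG
end

section
/- Let w>0 and w₁>0 be real and let n≥0 be an integer. Then the closed-form Barnes-type Changhee q-Bernoulli polynomial β_n(w:q|w₁) := (1-q)^{-n}·( (q-1)/log q + Σ_{l=1}^{n} binom(n,l)·(-1)^l·q^{l·w}·( l·w₁·(1-q) )/( 1-q^{l·w₁} ) ) tends, as the real parameter q tends to 1 from the left (q→1⁻ within (0,1)), to w₁^n·B_n(w/w₁), where B_n is the n-th Bernoulli polynomial. (The classical limit lim_{q→1} β_n(w:q|w₁) = w₁^n·B_n(w/w₁), corresponding to the generating-function limit w₁t·e^{wt}/(e^{w₁t}-1).) -/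
/-!
Put `q = e^s`, `u = w₁ s`, `x = w / w₁` and `G(t) = t e^{xt} / (e^t - 1)`. Term by term, the bracket
in `β_n` is `(q - 1)/s · ∑_{l=0}^{n} (-1)^l C(n,l) G(l u) = (q - 1)/s · (-1)^n Δ_u^n G(0)`, so
`β_n = (q - 1)/s · Δ_u^n G(0)/u^n · (u/(q - 1))^n`, where the outer factors tend to `1` and `w₁^n`.
Truncating the generating function identity `G(t) (e^t - 1) = t e^{xt}` with
`G(t) = ∑ B_k(x) t^k / k!` shows that `G` is its degree-`n` Taylor polynomial up to `o(tⁿ)`. The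
`n`-th difference with step `u` of an `o(tⁿ)` function is `o(uⁿ)`, and it maps a polynomial of
degree `≤ n` to `n!` times its `n`-th coefficient times `uⁿ`; hence `Δ_u^n G(0)/u^n → B_n(x)`.
-/

open Finset Filter Asymptotics Topology Polynomial
open scoped Nat fwdDiff PowerSeries

noncomputable section

def bernoulliGenSeries {A : Type*} [CommRing A] [Algebra ℚ A] (x : A) : PowerSeries A :=
  PowerSeries.mk fun k ↦ aeval x ((1 / k ! : ℚ) • Polynomial.bernoulli k)

def bernoulliGenFun (x t : ℝ) : ℝ :=
  if t = 0 then 1 else t * Real.exp (x * t) / (Real.exp t - 1)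

end

theorem Polynomial.fwdDiff_iter_eval_of_natDegree_le {R : Type*} [CommRing R] {P : R[X]} {n : ℕ}
    (hP : P.natDegree ≤ n) : (Δ_[1])^[n] P.eval = fun _ ↦ P.coeff n * n ! := by
  rcases hP.eq_or_lt with rfl | hlt
  · simpa [Pi.smul_def] using P.fwdDiff_iter_degree_eq_factorial
  · simp [fwdDiff_iter_eq_zero_of_degree_lt hlt, coeff_eq_zero_of_natDegree_lt hlt, Pi.zero_def]

theorem fwdDiff_iter_apply_zero_eq_comp_mul {R G : Type*} [Ring R] [AddCommGroup G]
    (f : R → G) (s : R) (n : ℕ) :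
    (Δ_[s])^[n] f 0 = (Δ_[1])^[n] (fun r ↦ f (r * s)) 0 := by
  simp [fwdDiff_iter_eq_sum_shift]

theorem Polynomial.fwdDiff_iter_eval_zero {R : Type*} [CommRing R] {P : R[X]} {n : ℕ}
    (hP : P.natDegree ≤ n) (s : R) : (Δ_[s])^[n] P.eval 0 = P.coeff n * s ^ n * n ! := by
  have hdeg : (P.comp (C s * X)).natDegree ≤ n := by
    refine natDegree_comp_le.trans ?_
    simpa using Nat.mul_le_mul hP ((natDegree_C_mul_le s X).trans natDegree_X_le)
  have hcomp : (fun r ↦ P.eval (r * s)) = (P.comp (C s * X)).eval := by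
    ext r; simp only [eval_comp, eval_mul, eval_C, eval_X, mul_comm]
  rw [fwdDiff_iter_apply_zero_eq_comp_mul, hcomp, fwdDiff_iter_eval_of_natDegree_le hdeg,
    comp_C_mul_X_coeff]

theorem isBigO_const_mul_pow {𝕜 : Type*} [NormedField 𝕜] (l : Filter 𝕜) (c : 𝕜) (N : ℕ) :
    (fun t ↦ (c * t) ^ N) =O[l] (· ^ N) := by
  simpa [mul_pow] using (isBigO_refl (fun t : 𝕜 ↦ t ^ N) l).const_mul_left (c ^ N)

theorem isLittleO_fwdDiff_iter {𝕜 E : Type*} [NormedField 𝕜] [NormedAddCommGroup E]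
    [NormedSpace 𝕜 E] {g : 𝕜 → E} {n : ℕ} (hg : g =o[𝓝 0] (· ^ n)) :
    (fun s ↦ (Δ_[s])^[n] g 0) =o[𝓝 0] (· ^ n) := by
  simp only [fwdDiff_iter_eq_sum_shift, zero_add, nsmul_eq_mul]
  refine IsLittleO.fun_sum fun k _ ↦ ?_
  have hk : Tendsto (fun s : 𝕜 ↦ (k : 𝕜) * s) (𝓝 0) (𝓝 0) := by
    simpa using (continuous_const_mul (k : 𝕜)).tendsto 0
  simp_rw [← Int.cast_smul_eq_zsmul 𝕜]
  exact ((hg.comp_tendsto hk).trans_isBigO (isBigO_const_mul_pow _ _ n)).const_smul_left _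

theorem sum_neg_one_pow_mul_choose_mul_eq_fwdDiff_iter {R : Type*} [CommRing R] (f : R → R)
    (h : R) (n : ℕ) :
    ∑ l ∈ range (n + 1), (-1) ^ l * n.choose l * f (l * h) = (-1) ^ n * (Δ_[h])^[n] f 0 := by
  rw [fwdDiff_iter_eq_sum_shift, mul_sum]
  refine sum_congr rfl fun l hl ↦ ?_
  obtain ⟨m, hm⟩ := Nat.exists_eq_add_of_le (mem_range_succ_iff.mp hl)
  have hsign : (-1 : R) ^ n = (-1) ^ l * (-1) ^ m := by rw [hm, pow_add]
  have hsq : ((-1 : R) ^ m) ^ 2 = 1 := by rw [← pow_mul, pow_mul', neg_one_sq, one_pow]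
  simp only [zero_add, nsmul_eq_mul, zsmul_eq_mul, show n - l = m by omega]
  push_cast
  linear_combination (-(-1) ^ m * n.choose l * f (l * h)) * hsign -
    ((-1) ^ l * n.choose l * f (l * h)) * hsq

theorem tendsto_fwdDiff_iter_div_pow {𝕜 : Type*} [NormedField 𝕜] {f : 𝕜 → 𝕜} {P : 𝕜[X]} {n : ℕ}
    (hP : P.natDegree ≤ n) (hf : (fun t ↦ f t - P.eval t) =o[𝓝 0] (· ^ n)) :
    Tendsto (fun s ↦ (Δ_[s])^[n] f 0 / s ^ n) (𝓝[≠] 0) (𝓝 (P.coeff n * n !)) := by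
  have hsplit (s : 𝕜) :
      (Δ_[s])^[n] f 0 = (Δ_[s])^[n] (fun t ↦ f t - P.eval t) 0 + P.coeff n * s ^ n * n ! := by
    have hdecomp : f = (fun t ↦ f t - P.eval t) + P.eval := by ext; simp
    nth_rewrite 1 [hdecomp]
    rw [fwdDiff_iter_add, Pi.add_apply, P.fwdDiff_iter_eval_zero hP]
  have h := ((isLittleO_fwdDiff_iter hf).tendsto_div_nhds_zero.mono_left
    (nhdsWithin_le_nhds (s := {0}ᶜ))).add_const (P.coeff n * n !)
  rw [zero_add] at h
  refine h.congr' ?_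
  filter_upwards [self_mem_nhdsWithin] with s (hs : s ≠ 0)
  rw [hsplit, add_div]
  field_simp

theorem PowerSeries.X_pow_dvd_sub_trunc {R : Type*} [CommRing R] (f : PowerSeries R) (N : ℕ) :
    X ^ N ∣ f - (trunc N f : PowerSeries R) := by
  rw [X_pow_dvd_iff]
  intro m hm
  simp [coeff_trunc, hm]

theorem X_pow_dvd_trunc_bernoulli_generating_function {A : Type*} [CommRing A] [Algebra ℚ A]
    (x : A) (n : ℕ) :
    X ^ (n + 2) ∣ X * PowerSeries.trunc (n + 2) (PowerSeries.rescale x (PowerSeries.exp A)) -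
      (PowerSeries.trunc (n + 2) (PowerSeries.exp A) - 1) *
        PowerSeries.trunc (n + 1) (bernoulliGenSeries x) := by
  open PowerSeries in
  set Ex := rescale x (exp A)
  set E := exp A
  set Φ := bernoulliGenSeries x
  have hΦ : Φ * (E - 1) = PowerSeries.X * Ex := bernoulli_generating_function x
  have key : PowerSeries.X ^ (n + 2) ∣ ((Polynomial.X * trunc (n + 2) Ex -
      (trunc (n + 2) E - 1) * trunc (n + 1) Φ : A[X]) : PowerSeries A) := by
    have hE : PowerSeries.X ∣ E - 1 := by simp [PowerSeries.X_dvd_iff, E]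
    -- Each truncation error is divisible by `X ^ (n + 2)`; the one of `Φ` borrows a factor `X`
    -- from `E - 1`.
    have h : ((Polynomial.X * trunc (n + 2) Ex - (trunc (n + 2) E - 1) * trunc (n + 1) Φ : A[X]) :
        A⟦X⟧) = -(PowerSeries.X * (Ex - (trunc (n + 2) Ex : A⟦X⟧))) +
          (Φ - (trunc (n + 1) Φ : A⟦X⟧)) * (E - 1) +
          (E - (trunc (n + 2) E : A⟦X⟧)) * (trunc (n + 1) Φ : A⟦X⟧) := by
      push_cast
      linear_combination -hΦ
    rw [h]
    refine dvd_add (dvd_add ((dvd_mul_of_dvd_right (X_pow_dvd_sub_trunc _ _) _).neg_right) ?_)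
      (dvd_mul_of_dvd_left (X_pow_dvd_sub_trunc _ _) _)
    rw [pow_succ]
    exact mul_dvd_mul (X_pow_dvd_sub_trunc _ _) hE
  rw [Polynomial.X_pow_dvd_iff]
  intro d hd
  rw [← Polynomial.coeff_coe]
  exact PowerSeries.X_pow_dvd_iff.mp key d hd

theorem isBigO_exp_mul_sub_eval_trunc (c : ℝ) (N : ℕ) :
    (fun t ↦ Real.exp (c * t) -
      (PowerSeries.trunc N (PowerSeries.rescale c (PowerSeries.exp ℝ))).eval t)
      =O[𝓝 0] (· ^ N) := by
  have heval (t : ℝ) : (PowerSeries.trunc N (PowerSeries.rescale c (PowerSeries.exp ℝ))).eval t =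
      ∑ i ∈ range N, (c * t) ^ i / i ! := by
    simp only [eval, PowerSeries.eval₂_trunc_eq_sum_range, PowerSeries.coeff_rescale,
      PowerSeries.coeff_exp, RingHom.id_apply, map_div₀, map_one, map_natCast]
    exact sum_congr rfl fun i _ ↦ by ring
  have hc : Tendsto (fun t : ℝ ↦ c * t) (𝓝 0) (𝓝 0) := by
    simpa using (continuous_const_mul c).tendsto 0
  simp_rw [heval]
  exact ((Real.exp_sub_sum_range_isBigO_pow N).comp_tendsto hc).trans
    (isBigO_const_mul_pow _ c N)

theorem tendsto_div_exp_sub_one : Tendsto (fun t ↦ t / (Real.exp t - 1)) (𝓝[≠] 0) (𝓝 1) := by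
  have h := hasDerivAt_iff_tendsto_slope.mp (Real.hasDerivAt_exp 0)
  simpa [slope_def_field] using h.inv₀ (by simp)

theorem isLittleO_bernoulliGenFun_sub_eval_trunc (x : ℝ) (n : ℕ) :
    (fun t ↦ bernoulliGenFun x t - (PowerSeries.trunc (n + 1) (bernoulliGenSeries x)).eval t)
      =o[𝓝 0] (· ^ n) := by
  obtain ⟨R, hR⟩ := X_pow_dvd_trunc_bernoulli_generating_function x n
  set P := PowerSeries.trunc (n + 1) (bernoulliGenSeries x)
  have hH : (fun t ↦ t * Real.exp (x * t) - (Real.exp t - 1) * P.eval t)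
      =O[𝓝 0] (· ^ (n + 2)) := by
    have hbdd (Q : ℝ[X]) : (fun t ↦ Q.eval t) =O[𝓝 0] (fun _ ↦ (1 : ℝ)) :=
      (Q.continuous.tendsto 0).isBigO_one ℝ
    have hexp := isBigO_exp_mul_sub_eval_trunc 1 (n + 2)
    simp only [one_mul, PowerSeries.rescale_one, RingHom.id_apply] at hexp
    have := (((hbdd X).mul (isBigO_exp_mul_sub_eval_trunc x (n + 2))).sub
      ((hbdd P).mul hexp)).add ((hbdd R).mul (isBigO_refl (fun t : ℝ ↦ t ^ (n + 2)) (𝓝 0)))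
    refine this.congr (fun t ↦ ?_) (fun t ↦ by simp)
    have hRt := congrArg (eval t) hR
    simp only [eval_sub, eval_mul, eval_X, eval_one, eval_pow] at hRt ⊢
    linear_combination -hRt
  have hsmall : (fun t ↦ bernoulliGenFun x t - P.eval t) =o[𝓝[≠] 0] (· ^ n) := by
    have := ((hH.mono nhdsWithin_le_nhds).mul (tendsto_div_exp_sub_one.isBigO_one ℝ)).mul
      (isBigO_refl (fun t : ℝ ↦ t⁻¹) _)
    -- away from `0`, `G - P = H · (t / (e^t - 1)) · t⁻¹`
    refine (this.congr' ?_ ?_).trans_isLittleO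
      ((isLittleO_pow_pow n.lt_succ_self).mono nhdsWithin_le_nhds)
    · filter_upwards [self_mem_nhdsWithin] with t (ht : t ≠ 0)
      have : Real.exp t - 1 ≠ 0 := sub_ne_zero.mpr (by simpa using ht)
      simp only [bernoulliGenFun, if_neg ht]
      field_simp
    · filter_upwards [self_mem_nhdsWithin] with t (ht : t ≠ 0)
      rw [pow_succ _ (n + 1)]
      field_simp
  have hzero : bernoulliGenFun x 0 - P.eval 0 = 0 := by
    simp [bernoulliGenFun, P, bernoulliGenSeries, ← coeff_zero_eq_eval_zero,
      PowerSeries.coeff_trunc]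
  rw [← nhdsNE_sup_pure]
  exact hsmall.sup (isLittleO_pure.mpr hzero)

theorem tendsto_fwdDiff_iter_bernoulliGenFun_div_pow (x : ℝ) (n : ℕ) :
    Tendsto (fun u ↦ (Δ_[u])^[n] (bernoulliGenFun x) 0 / u ^ n) (𝓝[≠] 0)
      (𝓝 (aeval x (Polynomial.bernoulli n))) := by
  have h := tendsto_fwdDiff_iter_div_pow
    (Nat.lt_succ_iff.mp (PowerSeries.natDegree_trunc_lt _ n))
    (isLittleO_bernoulliGenFun_sub_eval_trunc x n)
  convert h using 2
  simp [PowerSeries.coeff_trunc, bernoulliGenSeries, Rat.smul_def]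
  field_simp

theorem chBeta_eq_fwdDiff_iter (n : ℕ) {w q w₁ : ℝ} (hw₁ : w₁ ≠ 0) (hq : q ∈ Set.Ioo 0 1) :
    chBeta n w q w₁ = (q - 1) / Real.log q *
      ((Δ_[w₁ * Real.log q])^[n] (bernoulliGenFun (w / w₁)) 0 / (w₁ * Real.log q) ^ n) *
        (w₁ * Real.log q / (q - 1)) ^ n := by
  obtain ⟨s, rfl⟩ : ∃ s, q = Real.exp s := ⟨Real.log q, (Real.exp_log hq.1).symm⟩
  set G := bernoulliGenFun (w / w₁)
  have hs : s ≠ 0 := by simpa using hq.2.ne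
  have hq1 : Real.exp s - 1 ≠ 0 := sub_ne_zero.mpr hq.2.ne
  have hterm (l : ℕ) (hl : l ∈ Icc 1 n) :
      (n.choose l : ℝ) * (-1) ^ l * Real.exp s ^ ((l : ℝ) * w) * ((l : ℝ) * w₁ * (1 - Real.exp s)) /
        (1 - Real.exp s ^ ((l : ℝ) * w₁)) =
          (Real.exp s - 1) / s * ((-1) ^ l * n.choose l * G (l * (w₁ * s))) := by
    have hl : (l : ℝ) ≠ 0 := by have := (mem_Icc.mp hl).1; positivity
    have hlu : (l : ℝ) * (w₁ * s) ≠ 0 := by positivity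
    have hexp : Real.exp (l * (w₁ * s)) - 1 ≠ 0 := sub_ne_zero.mpr (by simpa using hlu)
    have hx : w / w₁ * (l * (w₁ * s)) = s * (l * w) := by field_simp
    rw [← Real.exp_mul, ← Real.exp_mul, show s * (l * w₁) = l * (w₁ * s) by ring]
    simp only [G, bernoulliGenFun, if_neg hlu, hx]
    generalize Real.exp (l * (w₁ * s)) = E at hexp ⊢
    rw [show 1 - E = -(E - 1) by ring]
    field_simp
    ring
  have hsplit : ∑ l ∈ range (n + 1), (-1) ^ l * n.choose l * G (l * (w₁ * s)) =
      1 + ∑ l ∈ Icc 1 n, (-1) ^ l * n.choose l * G (l * (w₁ * s)) := by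
    rw [range_eq_Ico, sum_eq_sum_Ico_succ_bot n.succ_pos]
    simp [G, bernoulliGenFun, Ico_add_one_right_eq_Icc]
  have hsign : (1 - Real.exp s) ^ n = (-1) ^ n * (Real.exp s - 1) ^ n := by
    rw [← mul_pow]; ring
  rw [chBeta, Real.log_exp, sum_congr rfl hterm, ← mul_sum, ← mul_one_add, ← hsplit,
    sum_neg_one_pow_mul_choose_mul_eq_fwdDiff_iter, hsign, div_pow]
  field_simp

theorem tendsto_log_nhdsWithin_Ioo_one :
    Tendsto Real.log (𝓝[Set.Ioo 0 1] 1) (𝓝[≠] 0) := by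
  refine tendsto_nhdsWithin_iff.mpr ⟨?_, ?_⟩
  · simpa using (Real.continuousAt_log one_ne_zero).tendsto.mono_left nhdsWithin_le_nhds
  · filter_upwards [self_mem_nhdsWithin] with q hq
    exact (Real.log_neg hq.1 hq.2).ne

theorem tendsto_log_div_sub_one_nhdsWithin_Ioo_one :
    Tendsto (fun q ↦ Real.log q / (q - 1)) (𝓝[Set.Ioo 0 1] 1) (𝓝 1) := by
  have h := hasDerivAt_iff_tendsto_slope.mp (Real.hasDerivAt_log one_ne_zero)
  rw [inv_one] at h
  refine (h.mono_left (nhdsWithin_mono _ fun q (hq : q ∈ Set.Ioo 0 1) ↦ hq.2.ne)).congr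
    fun q ↦ ?_
  simp [slope_def_field]

theorem stmt11_general (w w₁ : ℝ) (hw₁ : 0 < w₁) (n : ℕ) :
    Filter.Tendsto (fun q : ℝ => chBeta n w q w₁)
      (nhdsWithin 1 (Set.Ioo 0 1))
      (nhds (w₁ ^ n * Polynomial.aeval (w / w₁) (Polynomial.bernoulli n))) := by
  have hlog := tendsto_log_div_sub_one_nhdsWithin_Ioo_one
  have hstep : Tendsto (fun q ↦ w₁ * Real.log q) (𝓝[Set.Ioo 0 1] 1) (𝓝[≠] 0) := by
    have h0 := tendsto_log_nhdsWithin_Ioo_one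
    refine tendsto_nhdsWithin_iff.mpr ⟨?_, ?_⟩
    · simpa using (h0.mono_right nhdsWithin_le_nhds).const_mul w₁
    · filter_upwards [h0.eventually self_mem_nhdsWithin] with q (hq : Real.log q ≠ 0)
      exact mul_ne_zero hw₁.ne' hq
  have h := ((hlog.inv₀ one_ne_zero).mul
    ((tendsto_fwdDiff_iter_bernoulliGenFun_div_pow (w / w₁) n).comp hstep)).mul
    ((hlog.const_mul w₁).pow n)
  rw [inv_one, one_mul, mul_one, mul_comm] at h
  refine h.congr' ?_
  filter_upwards [self_mem_nhdsWithin] with q hq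
  rw [chBeta_eq_fwdDiff_iter n hw₁.ne' hq]
  simp only [Function.comp_apply, inv_div, mul_div_assoc]

/-- The classical limit `lim_{q→1⁻} β_n(w : q | w₁) = w₁^n·B_n(w/w₁)`, where `B_n` is the `n`-th
Bernoulli polynomial (with `B_1(X) = X - 1/2`). -/
theorem stmt11 (w w₁ : ℝ) (hw : 0 < w) (hw₁ : 0 < w₁) (n : ℕ) :
    Filter.Tendsto (fun q : ℝ => chBeta n w q w₁)
      (nhdsWithin 1 (Set.Ioo 0 1))
      (nhds (w₁ ^ n * Polynomial.aeval (w / w₁) (Polynomial.bernoulli n))) :=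
  stmt11_general w w₁ hw₁ n
end
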